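/- Let p and q be primitive words with |p| = 2|q|, and suppose p = x q x for some nonempty word x (so |q| = 2|x|) with xq non-primitive. Then either there exist nonempty words α, β and an odd integer s ≥ 1 with αβ primitive, q = (αβ)^s α, p = (βα)^{2s} β, |β| = 2|α|; or there exist nonempty words α, β and an even integer s ≥ 2 with αβ primitive, q = (αβ)^s α, p = (βα)^{2s+1} β, |α| = 2|β|. -/
import Mathlib


variable {A : Type*}

/-- k-fold concatenation of a word with itself. -/
def pw (w : List A) : ℕ → List A
  | 0 => []
  | n + 1 => w ++ pw w n

/-- A nonempty word is primitive if it is not a proper power. -/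
def Primitive (w : List A) : Prop :=
  w ≠ [] ∧ ∀ (v : List A) (m : ℕ), w = pw v m → m = 1

lemma pw_nil : ∀ n, pw ([] : List A) n = []
  | 0 => rfl
  | n + 1 => by simp [pw, pw_nil n]

lemma pw_length (w : List A) : ∀ n, (pw w n).length = n * w.length
  | 0 => by simp [pw]
  | n + 1 => by simp [pw, pw_length w n]; ring

lemma pw_one (w : List A) : pw w 1 = w := by simp [pw]

lemma pw_add (w : List A) (a b : ℕ) : pw w (a + b) = pw w a ++ pw w b := by
  induction a with
  | zero => simp [pw]
  | succ a ih =>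
    have : a + 1 + b = (a + b) + 1 := by omega
    rw [this]
    simp only [pw, ih, List.append_assoc]

lemma pw_snoc (w : List A) (n : ℕ) : pw w (n + 1) = pw w n ++ w := by
  rw [pw_add, pw_one]

lemma pw_mul (u : List A) (k m : ℕ) : pw (pw u k) m = pw u (m * k) := by
  induction m with
  | zero => simp [pw]
  | succ m ih =>
    simp only [pw, ih]
    rw [show (m + 1) * k = k + m * k by ring, pw_add]

lemma rot_pow (a b : List A) : ∀ n, a ++ pw (b ++ a) n = pw (a ++ b) n ++ a
  | 0 => by simp [pw]
  | n + 1 => by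
    simp only [pw, ← List.append_assoc]
    rw [List.append_assoc (a ++ b), rot_pow a b n, ← List.append_assoc]

lemma split_pw (a b v : List A) (i r m : ℕ) (h : a ++ b = pw v m)
    (him : i + 1 ≤ m) (hr : r ≤ v.length) (hlen : a.length = i * v.length + r) :
    a = pw v i ++ v.take r ∧ b = v.drop r ++ pw v (m - i - 1) := by
  have hm : m = i + (1 + (m - i - 1)) := by omega
  rw [hm, pw_add, pw_add, pw_one] at h
  have hv' : v.take r ++ (v.drop r ++ pw v (m - i - 1)) = v ++ pw v (m - i - 1) := by
    rw [← List.append_assoc, List.take_append_drop]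
  have h2 : a ++ b = (pw v i ++ v.take r) ++ (v.drop r ++ pw v (m - i - 1)) := by
    rw [h, List.append_assoc, hv']
  have hlen2 : a.length = (pw v i ++ v.take r).length := by
    simp [pw_length, List.length_take]
    omega
  exact List.append_inj h2 hlen2

lemma pw_conj (a b v : List A) (m : ℕ) (h : a ++ b = pw v m) :
    ∃ w, b ++ a = pw w m := by
  rcases Nat.eq_zero_or_pos m with hm | hm
  · subst hm
    have h0 := List.append_eq_nil_iff.mp h
    exact ⟨v, by simp [h0.1, h0.2, pw]⟩
  rcases eq_or_ne v [] with hv | hv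
  · rw [hv, pw_nil] at h
    have h0 := List.append_eq_nil_iff.mp h
    exact ⟨[], by rw [h0.1, h0.2, pw_nil]; rfl⟩
  have hv0 : 0 < v.length := List.length_pos_iff.mpr hv
  have hlab : a.length + b.length = m * v.length := by
    have := congrArg List.length h; simpa [pw_length] using this
  rcases le_or_gt m (a.length / v.length) with hi | hi
  · have hma : m * v.length ≤ a.length := by
      calc m * v.length ≤ (a.length / v.length) * v.length := Nat.mul_le_mul_right _ hi
        _ ≤ a.length := Nat.div_mul_le_self _ _
    have hb : b = [] := List.eq_nil_of_length_eq_zero (by omega)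
    have ha : a = pw v m := by rw [hb] at h; simpa using h
    exact ⟨v, by rw [hb, ha]; simp⟩
  · have hir : a.length = (a.length / v.length) * v.length + a.length % v.length := by
      rw [Nat.mul_comm]
      exact (Nat.div_add_mod _ _).symm
    have hr : a.length % v.length ≤ v.length := le_of_lt (Nat.mod_lt _ hv0)
    obtain ⟨ha, hb⟩ := split_pw a b v (a.length / v.length) (a.length % v.length) m h
      (by omega) hr hir
    set i := a.length / v.length
    set r := a.length % v.length
    refine ⟨v.drop r ++ v.take r, ?_⟩
    rw [ha, hb]
    have h1 : pw v (m - i - 1) ++ pw v i = pw v (m - 1) := by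
      rw [← pw_add]; congr 1; omega
    have hv2 : v = v.take r ++ v.drop r := (List.take_append_drop r v).symm
    calc (v.drop r ++ pw v (m - i - 1)) ++ (pw v i ++ v.take r)
        = v.drop r ++ (pw v (m - i - 1) ++ pw v i) ++ v.take r := by
          simp [List.append_assoc]
      _ = v.drop r ++ pw v (m - 1) ++ v.take r := by rw [h1]
      _ = v.drop r ++ pw (v.take r ++ v.drop r) (m - 1) ++ v.take r := by rw [← hv2]
      _ = (pw (v.drop r ++ v.take r) (m - 1) ++ v.drop r) ++ v.take r := by
          rw [rot_pow]
      _ = pw (v.drop r ++ v.take r) (m - 1) ++ (v.drop r ++ v.take r) := by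
          rw [List.append_assoc]
      _ = pw (v.drop r ++ v.take r) m := by
          rw [← pw_snoc]; congr 1; omega

lemma exists_primroot : ∀ (N : ℕ) (w : List A), w.length ≤ N → w ≠ [] →
    ∃ u k, Primitive u ∧ 1 ≤ k ∧ w = pw u k := by
  intro N
  induction N with
  | zero =>
    intro w h hw
    exact absurd (List.eq_nil_of_length_eq_zero (by omega)) hw
  | succ N ih =>
    intro w hwN hw
    by_cases hp : Primitive w
    · exact ⟨w, 1, hp, le_refl 1, (pw_one w).symm⟩
    · rw [Primitive] at hp; push_neg at hp
      obtain ⟨v, m0, hvm, hm0⟩ := hp hw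
      have hm2 : 2 ≤ m0 := by
        rcases m0 with _ | m0
        · exact absurd hvm hw
        · omega
      have hv : v ≠ [] := by
        intro h; rw [h, pw_nil] at hvm; exact hw hvm
      have hvp : 0 < v.length := List.length_pos_iff.mpr hv
      have hwl : w.length = m0 * v.length := by
        have := congrArg List.length hvm; simpa [pw_length] using this
      have hlv : v.length ≤ N := by nlinarith
      obtain ⟨u, k, hu, hk, huk⟩ := ih v hlv hv
      exact ⟨u, m0 * k, hu, Nat.mul_pos (by omega) hk, by rw [hvm, huk, pw_mul]⟩

lemma assemble (b a : List A) (k t : ℕ) :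
    (pw (b ++ a) k ++ b) ++ (a ++ pw (b ++ a) t) ++ (pw (b ++ a) k ++ b)
      = pw (b ++ a) (k + 1 + t + k) ++ b := by
  rw [pw_add, pw_add, pw_add, pw_one]
  simp [List.append_assoc]

theorem technical_decomposition (p q x : List A) (hp : Primitive p) (hq : Primitive q)
    (hlen : p.length = 2 * q.length) (hx : x ≠ []) (hpx : p = x ++ q ++ x)
    (hxq : ¬ Primitive (x ++ q)) :
    (∃ (α β : List A) (s : ℕ), α ≠ [] ∧ β ≠ [] ∧ Odd s ∧ 1 ≤ s ∧ Primitive (α ++ β) ∧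
        q = pw (α ++ β) s ++ α ∧ p = pw (β ++ α) (2 * s) ++ β ∧ β.length = 2 * α.length) ∨
      (∃ (α β : List A) (s : ℕ), α ≠ [] ∧ β ≠ [] ∧ Even s ∧ 2 ≤ s ∧ Primitive (α ++ β) ∧
        q = pw (α ++ β) s ++ α ∧ p = pw (β ++ α) (2 * s + 1) ++ β ∧ α.length = 2 * β.length) := by
  have hxlen : 0 < x.length := List.length_pos_iff.mpr hx
  have hqx : q.length = 2 * x.length := by
    have := congrArg List.length hpx
    simp [List.length_append] at this
    omega
  have hne : x ++ q ≠ [] := fun h => hx (List.append_eq_nil_iff.mp h).1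
  rw [Primitive] at hxq
  push_neg at hxq
  obtain ⟨v0, m0, hv0, hm0⟩ := hxq hne
  have hm0' : 2 ≤ m0 := by
    rcases m0 with _ | m0
    · exact absurd hv0 hne
    · omega
  have hv0ne : v0 ≠ [] := by
    intro h; rw [h, pw_nil] at hv0; exact hne hv0
  obtain ⟨u, k0, hu, hk0, hveq⟩ := exists_primroot v0.length v0 le_rfl hv0ne
  have hxqu : x ++ q = pw u (m0 * k0) := by rw [hv0, hveq, pw_mul]
  set m := m0 * k0 with hmdef
  have hm : 2 ≤ m := by
    calc 2 ≤ m0 := hm0'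
      _ = m0 * 1 := by ring
      _ ≤ m0 * k0 := Nat.mul_le_mul_left _ hk0
  have hun : u ≠ [] := hu.1
  have hn : 0 < u.length := List.length_pos_iff.mpr hun
  have h3 : m * u.length = 3 * x.length := by
    have := congrArg List.length hxqu
    simp [pw_length, List.length_append] at this
    omega
  obtain ⟨k, hk | hk | hk⟩ : ∃ k, m = 3 * k ∨ m = 3 * k + 1 ∨ m = 3 * k + 2 :=
    ⟨m / 3, by omega⟩
  · -- m = 3k : contradiction with primitivity of q
    exfalso
    have hk1 : 1 ≤ k := by omega
    have hxl : x.length = k * u.length := by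
      have h1 : 3 * (k * u.length) = 3 * x.length := by rw [← h3, hk]; ring
      omega
    obtain ⟨hxeq, hqeq⟩ := split_pw x q u k 0 m hxqu (by omega) (by omega) (by omega)
    have hq2 : q = pw u (2 * k) := by
      rw [hqeq]
      simp only [List.drop_zero]
      rw [show m - k - 1 = (2 * k - 1) by omega, show 2 * k = (2 * k - 1) + 1 by omega]
      rfl
    have := hq.2 u (2 * k) hq2
    omega
  · -- m = 3k+1 : even case
    have h3n : (3 : ℕ) ∣ u.length := by
      have hdvd : (3 : ℕ) ∣ m * u.length := ⟨x.length, by omega⟩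
      rcases (Nat.Prime.dvd_mul (by norm_num)).mp hdvd with h | h
      · exfalso; omega
      · exact h
    obtain ⟨d, hd⟩ := h3n
    have hd1 : 1 ≤ d := by omega
    have hk1 : 1 ≤ k := by omega
    have hxl : x.length = k * u.length + d := by
      have h1 : 3 * ((3 * k + 1) * d) = 3 * x.length := by rw [← h3, hk, hd]; ring
      have h2 : (3 * k + 1) * d = x.length := by omega
      rw [hd, ← h2]; ring
    obtain ⟨hxeq, hqeq⟩ := split_pw x q u k d m hxqu (by omega) (by omega) hxl
    set β := u.take d with hβ
    set α := u.drop d with hα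
    have huba : u = β ++ α := (List.take_append_drop d u).symm
    have hαl : α.length = 2 * d := by simp [hα]; omega
    have hβl : β.length = d := by simp [hβ]; omega
    have hq2 : q = α ++ pw u (2 * k) := by
      rw [hqeq, show m - k - 1 = 2 * k by omega]
    refine Or.inr ⟨α, β, 2 * k, ?_, ?_, ?_, by omega, ?_, ?_, ?_, by omega⟩
    · intro h; rw [h] at hαl; simp at hαl; omega
    · intro h; rw [h] at hβl; simp at hβl; omega
    · exact ⟨k, by ring⟩
    · constructor
      · intro h
        have := congrArg List.length h
        simp [hαl, hβl] at this
        omega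
      · intro w mm hw
        obtain ⟨w', hw'⟩ := pw_conj α β w mm hw
        exact hu.2 w' mm (huba.trans hw')
    · rw [hq2, huba, rot_pow]
    · rw [hpx, hxeq, hq2, huba, show 2 * (2 * k) + 1 = k + 1 + 2 * k + k by ring]
      exact assemble β α k (2 * k)
  · -- m = 3k+2 : odd case
    have h3n : (3 : ℕ) ∣ u.length := by
      have hdvd : (3 : ℕ) ∣ m * u.length := ⟨x.length, by omega⟩
      rcases (Nat.Prime.dvd_mul (by norm_num)).mp hdvd with h | h
      · exfalso; omega
      · exact h
    obtain ⟨d, hd⟩ := h3n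
    have hd1 : 1 ≤ d := by omega
    have hxl : x.length = k * u.length + 2 * d := by
      have h1 : 3 * ((3 * k + 2) * d) = 3 * x.length := by rw [← h3, hk, hd]; ring
      have h2 : (3 * k + 2) * d = x.length := by omega
      rw [hd, ← h2]; ring
    obtain ⟨hxeq, hqeq⟩ := split_pw x q u k (2 * d) m hxqu (by omega) (by omega) hxl
    set β := u.take (2 * d) with hβ
    set α := u.drop (2 * d) with hα
    have huba : u = β ++ α := (List.take_append_drop (2 * d) u).symm
    have hαl : α.length = d := by simp [hα]; omega
    have hβl : β.length = 2 * d := by simp [hβ]; omega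
    have hq2 : q = α ++ pw u (2 * k + 1) := by
      rw [hqeq, show m - k - 1 = 2 * k + 1 by omega]
    refine Or.inl ⟨α, β, 2 * k + 1, ?_, ?_, ?_, by omega, ?_, ?_, ?_, by omega⟩
    · intro h; rw [h] at hαl; simp at hαl; omega
    · intro h; rw [h] at hβl; simp at hβl; omega
    · exact ⟨k, by ring⟩
    · constructor
      · intro h
        have := congrArg List.length h
        simp [hαl, hβl] at this
        omega
      · intro w mm hw
        obtain ⟨w', hw'⟩ := pw_conj α β w mm hw
        exact hu.2 w' mm (huba.trans hw')
    · rw [hq2, huba, rot_pow]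
    · rw [hpx, hxeq, hq2, huba, show 2 * (2 * k + 1) = k + 1 + (2 * k + 1) + k by ring]
      exact assemble β α k (2 * k + 1)
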